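/- Let z₀, ..., z_{k-1} ∈ ℝ^d, let (p₀, ..., p_{k-1}) be a probability distribution with p₀ > 0, and let Z = Σᵢ pᵢ zᵢ zᵢᵀ. Let M be a symmetric d×d matrix, let u₁, ..., u_ℓ be the top ℓ singular vectors of M, and U = [u₁, ..., u_ℓ]. If ℓ < k then ‖(I − UUᵀ) z₀‖² ≤ (2(ℓ+1)‖M − Z‖ + maxⱼ ‖zⱼ‖²) / ((ℓ+1) p₀), and if ℓ ≥ k then ‖(I − UUᵀ) z₀‖² ≤ 2‖M − Z‖ / p₀. -/

import Mathlib

/-!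
Write `Z = ∑ pᵢ zᵢ zᵢᵀ`, `ε = ‖M - Z‖`, `x = (I - UUᵀ) z₀`, and let `σ` be the `(ℓ+1)`-st largest
singular value of `M`. As `x` is orthogonal to the top `ℓ` eigenvectors, `⟪x, M x⟫ ≤ σ ‖x‖²`;
as `⟪z₀, x⟫ = ‖x‖²`, `p₀ ‖x‖⁴ ≤ ⟪x, Z x⟫ ≤ ⟪x, M x⟫ + ε ‖x‖²`. Hence `p₀ ‖x‖² ≤ σ + ε`.

It remains to bound `σ`. A unit eigenvector `f` of `M` with eigenvalue `λ` has
`|λ| ≤ ⟪f, Z f⟫ + ε`; summing over the top `ℓ + 1` eigenvectors and using Bessel's inequality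
gives `(ℓ + 1) σ ≤ ∑ pᵢ ‖zᵢ‖² + (ℓ + 1) ε`.
If `k ≤ ℓ`, then `Z` has rank at most `k`, so the span of the top `k + 1` eigenvectors contains
some `w ≠ 0` with `Z w = 0`, and `σ ‖w‖ ≤ ‖M w‖ = ‖(M - Z) w‖ ≤ ε ‖w‖` (Weyl's inequality).
-/

open Matrix

noncomputable def opNorm {d : ℕ} (M : Matrix (Fin d) (Fin d) ℝ) : ℝ :=
  ‖Matrix.toEuclideanCLM (𝕜 := ℝ) M‖

def fromE {d : ℕ} (x : EuclideanSpace ℝ (Fin d)) : Fin d → ℝ :=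
  (WithLp.equiv 2 (Fin d → ℝ)) x

noncomputable def toE {d : ℕ} (x : Fin d → ℝ) : EuclideanSpace ℝ (Fin d) :=
  (WithLp.equiv 2 (Fin d → ℝ)).symm x

open InnerProductSpace
open scoped RealInnerProductSpace

section InnerProductSpace

variable {E : Type*} [NormedAddCommGroup E] [InnerProductSpace ℝ E]
  {ι κ : Type*} [Fintype ι] [Fintype κ] {T : E →L[ℝ] E}

noncomputable def secondMoment (p : κ → ℝ) (z : κ → E) : E →L[ℝ] E :=
  ∑ i, p i • rankOne ℝ (z i) (z i)

lemma secondMoment_apply (p : κ → ℝ) (z : κ → E) (x : E) :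
    secondMoment p z x = ∑ i, (p i * ⟪z i, x⟫) • z i := by
  simp [secondMoment, mul_smul]

lemma inner_secondMoment_apply_self (p : κ → ℝ) (z : κ → E) (x : E) :
    ⟪x, secondMoment p z x⟫ = ∑ i, p i * ⟪z i, x⟫ ^ 2 := by
  simp only [secondMoment_apply, inner_sum, real_inner_smul_right, real_inner_comm x]
  exact Finset.sum_congr rfl fun i _ => by ring

lemma abs_inner_apply_self_le (A : E →L[ℝ] E) (x : E) : |⟪x, A x⟫| ≤ ‖A‖ * ‖x‖ ^ 2 :=
  calc |⟪x, A x⟫| ≤ ‖x‖ * ‖A x‖ := abs_real_inner_le_norm _ _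
    _ ≤ ‖x‖ * (‖A‖ * ‖x‖) := by gcongr; exact A.le_opNorm x
    _ = ‖A‖ * ‖x‖ ^ 2 := by ring

lemma mul_norm_sq_le_add_norm_sub_secondMoment {p : κ → ℝ} (hp : ∀ i, 0 ≤ p i) (z : κ → E)
    {x : E} {σ : ℝ} (hσ : 0 ≤ σ) (hTx : ⟪x, T x⟫ ≤ σ * ‖x‖ ^ 2)
    {i₀ : κ} (hx : ⟪z i₀, x⟫ = ‖x‖ ^ 2) :
    p i₀ * ‖x‖ ^ 2 ≤ σ + ‖T - secondMoment p z‖ := by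
  rcases eq_or_ne x 0 with rfl | hx0
  · simpa using add_nonneg hσ (norm_nonneg _)
  have hE := neg_le_of_abs_le (abs_inner_apply_self_le (T - secondMoment p z) x)
  refine le_of_mul_le_mul_right ?_ (by positivity : 0 < ‖x‖ ^ 2)
  calc p i₀ * ‖x‖ ^ 2 * ‖x‖ ^ 2 = p i₀ * ⟪z i₀, x⟫ ^ 2 := by rw [hx]; ring
    _ ≤ ∑ i, p i * ⟪z i, x⟫ ^ 2 :=
      Finset.single_le_sum (f := fun i => p i * ⟪z i, x⟫ ^ 2)
        (fun i _ => mul_nonneg (hp i) (sq_nonneg _)) (Finset.mem_univ i₀)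
    _ = ⟪x, T x⟫ - ⟪x, (T - secondMoment p z) x⟫ := by
      rw [← inner_secondMoment_apply_self, _root_.sub_apply, inner_sub_right]
      ring
    _ ≤ (σ + ‖T - secondMoment p z‖) * ‖x‖ ^ 2 := by linarith

lemma sum_inner_secondMoment_apply_le {f : ι → E} (hf : Orthonormal ℝ f) {p : κ → ℝ}
    (hp : ∀ i, 0 ≤ p i) (z : κ → E) :
    ∑ j, ⟪f j, secondMoment p z (f j)⟫ ≤ ∑ i, p i * ‖z i‖ ^ 2 := by
  simp_rw [inner_secondMoment_apply_self]
  rw [Finset.sum_comm]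
  simp_rw [← Finset.mul_sum]
  gcongr with i _
  · exact hp i
  simpa [real_inner_comm] using hf.sum_inner_products_le (z i) (s := Finset.univ)

lemma abs_eigenvalue_le_inner_secondMoment_add {v : E} {c : ℝ} (hv : ‖v‖ = 1)
    (hTv : T v = c • v) {p : κ → ℝ} (hp : ∀ i, 0 ≤ p i) (z : κ → E) :
    |c| ≤ ⟪v, secondMoment p z v⟫ + ‖T - secondMoment p z‖ := by
  have hc : c = ⟪v, secondMoment p z v⟫ + ⟪v, (T - secondMoment p z) v⟫ := by
    rw [_root_.sub_apply, inner_sub_right, hTv, real_inner_smul_right,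
      real_inner_self_eq_norm_sq, hv]
    ring
  have hZ : 0 ≤ ⟪v, secondMoment p z v⟫ := by
    rw [inner_secondMoment_apply_self]
    exact Finset.sum_nonneg fun i _ => mul_nonneg (hp i) (sq_nonneg _)
  have hE := abs_inner_apply_self_le (T - secondMoment p z) v
  rw [hv, one_pow, mul_one] at hE
  rw [hc]
  exact (abs_add_le _ _).trans (by rw [abs_of_nonneg hZ]; linarith)

lemma card_mul_le_sum_mul_norm_sq_add {f : ι → E} (hf : Orthonormal ℝ f) {μ : ι → ℝ}
    (hTf : ∀ j, T (f j) = μ j • f j) {σ : ℝ} (hσ : ∀ j, σ ≤ |μ j|)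
    {p : κ → ℝ} (hp : ∀ i, 0 ≤ p i) (z : κ → E) :
    Fintype.card ι * σ ≤ ∑ i, p i * ‖z i‖ ^ 2 + Fintype.card ι * ‖T - secondMoment p z‖ :=
  calc Fintype.card ι * σ = ∑ _j : ι, σ := by simp
    _ ≤ ∑ j, (⟪f j, secondMoment p z (f j)⟫ + ‖T - secondMoment p z‖) :=
      Finset.sum_le_sum fun j _ =>
        (hσ j).trans (abs_eigenvalue_le_inner_secondMoment_add (hf.norm_eq_one j) (hTf j) hp z)
    _ ≤ ∑ i, p i * ‖z i‖ ^ 2 + Fintype.card ι * ‖T - secondMoment p z‖ := by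
      rw [Finset.sum_add_distrib, Finset.sum_const, nsmul_eq_mul, Finset.card_univ]
      gcongr
      exact sum_inner_secondMoment_apply_le hf hp z

lemma apply_eq_sum_of_eigenbasis {b : OrthonormalBasis ι ℝ E} {μ : ι → ℝ}
    (hb : ∀ i, T (b i) = μ i • b i) (x : E) : T x = ∑ i, (μ i * ⟪b i, x⟫) • b i := by
  conv_lhs => rw [← b.sum_repr' x]
  simp only [map_sum, ContinuousLinearMap.map_smul, hb, smul_smul]
  exact Finset.sum_congr rfl fun i _ => by rw [mul_comm]

lemma inner_apply_self_le_of_eigenbasis {b : OrthonormalBasis ι ℝ E} {μ : ι → ℝ}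
    (hb : ∀ i, T (b i) = μ i • b i) {x : E} {σ : ℝ} (hσ : ∀ i, ⟪b i, x⟫ ≠ 0 → μ i ≤ σ) :
    ⟪x, T x⟫ ≤ σ * ‖x‖ ^ 2 := by
  rw [apply_eq_sum_of_eigenbasis hb, ← b.sum_sq_inner_right x, Finset.mul_sum, inner_sum]
  refine Finset.sum_le_sum fun i _ => ?_
  rw [real_inner_smul_right, real_inner_comm (b i) x, mul_assoc, ← sq]
  by_cases hi : ⟪b i, x⟫ = 0
  · simp [hi]
  · exact mul_le_mul_of_nonneg_right (hσ i hi) (sq_nonneg _)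

lemma Orthonormal.norm_sum_smul_sq {f : ι → E} (hf : Orthonormal ℝ f) (c : ι → ℝ) :
    ‖∑ j, c j • f j‖ ^ 2 = ∑ j, c j ^ 2 := by
  rw [← real_inner_self_eq_norm_sq, hf.inner_sum]
  simp [sq]

lemma mul_norm_le_norm_apply_sum_smul {f : ι → E} (hf : Orthonormal ℝ f) {μ : ι → ℝ}
    (hTf : ∀ j, T (f j) = μ j • f j) {σ : ℝ} (hσ0 : 0 ≤ σ) (hσ : ∀ j, σ ≤ |μ j|) (c : ι → ℝ) :
    σ * ‖∑ j, c j • f j‖ ≤ ‖T (∑ j, c j • f j)‖ := by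
  have hTsum : T (∑ j, c j • f j) = ∑ j, (c j * μ j) • f j := by
    simp only [map_sum, map_smul, hTf, smul_smul]
  refine le_of_pow_le_pow_left₀ two_ne_zero (norm_nonneg _) ?_
  rw [hTsum, mul_pow, hf.norm_sum_smul_sq, hf.norm_sum_smul_sq, Finset.mul_sum]
  gcongr with j
  rw [mul_pow, mul_comm]
  exact mul_le_mul_of_nonneg_left (by simpa using pow_le_pow_left₀ hσ0 (hσ j) 2) (sq_nonneg _)

lemma exists_ne_zero_forall_inner_sum_smul_eq_zero (f : ι → E) (z : κ → E)
    (hcard : Fintype.card κ < Fintype.card ι) :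
    ∃ c : ι → ℝ, c ≠ 0 ∧ ∀ i, ⟪z i, ∑ j, c j • f j⟫ = 0 := by
  let L : (ι → ℝ) →ₗ[ℝ] κ → ℝ :=
    LinearMap.pi fun i => (innerₛₗ ℝ (z i)).comp (Fintype.linearCombination ℝ f)
  obtain ⟨c, hc, hc0⟩ := (Submodule.ne_bot_iff _).mp
    (L.ker_ne_bot_of_finrank_lt (by simpa using hcard))
  refine ⟨c, hc0, fun i => ?_⟩
  simpa [L, Fintype.linearCombination_apply] using congr_fun (LinearMap.mem_ker.mp hc) i

theorem le_norm_sub_secondMoment_of_card_lt {f : ι → E} (hf : Orthonormal ℝ f) {μ : ι → ℝ}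
    (hTf : ∀ j, T (f j) = μ j • f j) {σ : ℝ} (hσ : ∀ j, σ ≤ |μ j|) (p : κ → ℝ) (z : κ → E)
    (hcard : Fintype.card κ < Fintype.card ι) :
    σ ≤ ‖T - secondMoment p z‖ := by
  rcases lt_or_ge σ 0 with hσ0 | hσ0
  · exact hσ0.le.trans (norm_nonneg _)
  obtain ⟨c, hc0, hcz⟩ := exists_ne_zero_forall_inner_sum_smul_eq_zero f z hcard
  set w := ∑ j, c j • f j
  have hw : 0 < ‖w‖ := by
    refine norm_pos_iff.mpr fun hw => hc0 ?_
    exact funext (Fintype.linearIndependent_iff.mp hf.linearIndependent c hw)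
  have hZw : secondMoment p z w = 0 := by simp [secondMoment_apply, hcz]
  refine le_of_mul_le_mul_right ?_ hw
  calc σ * ‖w‖ ≤ ‖T w‖ := mul_norm_le_norm_apply_sum_smul hf hTf hσ0 hσ c
    _ = ‖(T - secondMoment p z) w‖ := by rw [_root_.sub_apply, hZw, sub_zero]
    _ ≤ ‖T - secondMoment p z‖ * ‖w‖ := ContinuousLinearMap.le_opNorm _ _

lemma Orthonormal.inner_sub_sum_inner_smul_eq_zero {u : ι → E} (hu : Orthonormal ℝ u) (y : E)
    (j : ι) : ⟪u j, y - ∑ i, ⟪u i, y⟫ • u i⟫ = 0 := by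
  rw [inner_sub_right, hu.inner_right_fintype, sub_self]

lemma Orthonormal.inner_sub_sum_inner_smul_eq_norm_sq {u : ι → E} (hu : Orthonormal ℝ u) (y : E) :
    ⟪y, y - ∑ i, ⟪u i, y⟫ • u i⟫ = ‖y - ∑ i, ⟪u i, y⟫ • u i‖ ^ 2 := by
  rw [← real_inner_self_eq_norm_sq, inner_sub_left]
  simp [sum_inner, real_inner_smul_left, hu.inner_sub_sum_inner_smul_eq_zero]

theorem mul_norm_sq_sub_sum_inner_smul_le {d ℓ : ℕ} (hℓd : ℓ < d)
    {b : OrthonormalBasis (Fin d) ℝ E} {μ : Fin d → ℝ} (hb : ∀ i, T (b i) = μ i • b i)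
    (hμ : Antitone fun i => |μ i|) {p : κ → ℝ} (hp : ∀ i, 0 ≤ p i) (z : κ → E) (i₀ : κ) :
    p i₀ * ‖z i₀ - ∑ j : Fin ℓ, ⟪b (Fin.castLE hℓd.le j), z i₀⟫ • b (Fin.castLE hℓd.le j)‖ ^ 2
      ≤ |μ ⟨ℓ, hℓd⟩| + ‖T - secondMoment p z‖ := by
  have hu : Orthonormal ℝ fun j : Fin ℓ => b (Fin.castLE hℓd.le j) :=
    b.orthonormal.comp _ (Fin.castLE_injective _)
  refine mul_norm_sq_le_add_norm_sub_secondMoment hp z (abs_nonneg _) ?_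
    (hu.inner_sub_sum_inner_smul_eq_norm_sq _)
  refine inner_apply_self_le_of_eigenbasis hb fun i hi => (le_abs_self _).trans (hμ ?_)
  by_contra! hiℓ
  exact hi (hu.inner_sub_sum_inner_smul_eq_zero _ ⟨i, hiℓ⟩)

end InnerProductSpace

section Matrix

variable {d : ℕ}

lemma toEuclideanCLM_vecMulVec (a b : EuclideanSpace ℝ (Fin d)) :
    toEuclideanCLM (𝕜 := ℝ) (vecMulVec (fromE a) (fromE b)) = rankOne ℝ a b := by
  ext x i
  simp [fromE, vecMulVec_mulVec, dotProduct, PiLp.inner_apply, mul_comm]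

lemma toEuclideanCLM_sum_smul_vecMulVec {κ : Type*} [Fintype κ] (p : κ → ℝ)
    (z : κ → EuclideanSpace ℝ (Fin d)) :
    toEuclideanCLM (𝕜 := ℝ) (∑ i, p i • vecMulVec (fromE (z i)) (fromE (z i)))
      = secondMoment p z := by
  simp [secondMoment, toEuclideanCLM_vecMulVec]

lemma toE_one_sub_sum_vecMulVec_mulVec {ι : Type*} [Fintype ι] (u : ι → EuclideanSpace ℝ (Fin d))
    (y : EuclideanSpace ℝ (Fin d)) :
    toE ((1 - ∑ j, vecMulVec (fromE (u j)) (fromE (u j))) *ᵥ fromE y)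
      = y - ∑ j, ⟪u j, y⟫ • u j := by
  have h := toEuclideanCLM_sum_smul_vecMulVec (fun _ => (1 : ℝ)) u
  simp only [one_smul] at h
  change toEuclideanCLM (𝕜 := ℝ) _ y = _
  rw [map_sub, map_one, h, _root_.sub_apply, secondMoment_apply]
  simp

lemma Matrix.IsHermitian.toEuclideanCLM_eigenvectorBasis {M : Matrix (Fin d) (Fin d) ℝ}
    (hM : M.IsHermitian) (i : Fin d) :
    toEuclideanCLM (𝕜 := ℝ) M (hM.eigenvectorBasis i)
      = hM.eigenvalues i • hM.eigenvectorBasis i :=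
  congrArg (WithLp.toLp 2) (hM.mulVec_eigenvectorBasis i)

lemma Matrix.IsHermitian.exists_antitone_eigenbasis {ℓ : ℕ} (hℓd : ℓ ≤ d)
    {M : Matrix (Fin d) (Fin d) ℝ} (hM : M.IsHermitian) (u : Fin ℓ → EuclideanSpace ℝ (Fin d))
    (hu : ∀ j : Fin ℓ, u j = hM.eigenvectorBasis
      ((Tuple.sort fun i => |hM.eigenvalues i|) ⟨d - 1 - (j : ℕ), by omega⟩)) :
    ∃ (b : OrthonormalBasis (Fin d) ℝ (EuclideanSpace ℝ (Fin d))) (μ : Fin d → ℝ),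
      (∀ i, toEuclideanCLM (𝕜 := ℝ) M (b i) = μ i • b i) ∧ Antitone (fun i => |μ i|) ∧
      u = fun j => b (Fin.castLE hℓd j) := by
  set e := Fin.revPerm.trans (Tuple.sort fun i => |hM.eigenvalues i|)
  refine ⟨hM.eigenvectorBasis.reindex e.symm, hM.eigenvalues ∘ e, fun i => ?_, fun i j hij => ?_,
    funext fun j => ?_⟩
  · simpa using hM.toEuclideanCLM_eigenvectorBasis (e i)
  · exact Tuple.monotone_sort (fun i => |hM.eigenvalues i|) (Fin.rev_le_rev.mpr hij)
  · rw [hu j, OrthonormalBasis.reindex_apply, Equiv.symm_symm]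
    simp only [e, Equiv.trans_apply, Fin.revPerm_apply]
    congr 2
    ext
    simp only [Fin.val_rev, Fin.val_castLE]
    omega

end Matrix

/-- Let `Z = Σᵢ pᵢ zᵢ zᵢᵀ` with `(pᵢ)` a probability distribution, `p₀ > 0`.
Let `M` be symmetric and `u₁, ..., u_ℓ` its top `ℓ` singular vectors (orthonormal eigenvectors
of `M` for its `ℓ` largest singular values, i.e. eigenvalues ordered by absolute value),
`U = [u₁, ..., u_ℓ]`. If `ℓ < k` then
`‖(I − UUᵀ)z₀‖² ≤ (2(ℓ+1)‖M − Z‖ + maxⱼ ‖zⱼ‖²)/((ℓ+1) p₀)`,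
and if `ℓ ≥ k` then `‖(I − UUᵀ)z₀‖² ≤ 2‖M − Z‖/p₀`. -/
theorem subspace_recovery {d ℓ k : ℕ} [NeZero k] (hℓd : ℓ ≤ d)
    (p : Fin k → ℝ) (hp : ∀ i, 0 ≤ p i) (hp1 : ∑ i, p i = 1) (hp0 : 0 < p 0)
    (z : Fin k → EuclideanSpace ℝ (Fin d))
    (M : Matrix (Fin d) (Fin d) ℝ) (hM : M.IsHermitian)
    (u : Fin ℓ → EuclideanSpace ℝ (Fin d))
    (hu : ∀ j : Fin ℓ, u j = hM.eigenvectorBasis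
      ((Tuple.sort fun i => |hM.eigenvalues i|)
        ⟨d - 1 - (j : ℕ), by have := j.isLt; omega⟩)) :
    (ℓ < k →
      ‖toE ((1 - ∑ j, vecMulVec (fromE (u j)) (fromE (u j))).mulVec (fromE (z 0)))‖ ^ 2
        ≤ (2 * (ℓ + 1) * opNorm (M - ∑ i, p i • vecMulVec (fromE (z i)) (fromE (z i)))
            + ⨆ j, ‖z j‖ ^ 2) / ((ℓ + 1) * p 0)) ∧
    (k ≤ ℓ →
      ‖toE ((1 - ∑ j, vecMulVec (fromE (u j)) (fromE (u j))).mulVec (fromE (z 0)))‖ ^ 2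
        ≤ 2 * opNorm (M - ∑ i, p i • vecMulVec (fromE (z i)) (fromE (z i))) / p 0) := by
  obtain ⟨b, μ, hb, hμ, rfl⟩ := hM.exists_antitone_eigenbasis hℓd u hu
  rw [toE_one_sub_sum_vecMulVec_mulVec, opNorm, map_sub, toEuclideanCLM_sum_smul_vecMulVec]
  set ε := ‖toEuclideanCLM (𝕜 := ℝ) M - secondMoment p z‖
  set S := ⨆ j, ‖z j‖ ^ 2
  have hε : 0 ≤ ε := norm_nonneg _
  have hzS : ∀ i, ‖z i‖ ^ 2 ≤ S := fun i =>
    le_ciSup (f := fun j => ‖z j‖ ^ 2) (Set.finite_range _).bddAbove i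
  have hS : ∑ i, p i * ‖z i‖ ^ 2 ≤ S :=
    calc ∑ i, p i * ‖z i‖ ^ 2 ≤ ∑ i, p i * S := by gcongr with i; exacts [hp i, hzS i]
      _ = S := by rw [← Finset.sum_mul, hp1, one_mul]
  rcases hℓd.lt_or_eq with hℓ | rfl
  · have hx := mul_norm_sq_sub_sum_inner_smul_le hℓ hb hμ hp z 0
    have htop : (ℓ + 1) * |μ ⟨ℓ, hℓ⟩| ≤ ∑ i, p i * ‖z i‖ ^ 2 + (ℓ + 1) * ε := by
      simpa using card_mul_le_sum_mul_norm_sq_add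
        (b.orthonormal.comp _ (Fin.castLE_injective hℓ)) (fun j => hb _)
        (fun j => hμ (Fin.le_iff_val_le_val.mpr (by simp only [Fin.val_castLE]; omega))) hp z
    refine ⟨fun _ => ?_, fun hkℓ => ?_⟩
    · have hx' := mul_le_mul_of_nonneg_left hx (by positivity : (0 : ℝ) ≤ ℓ + 1)
      rw [le_div_iff₀ (by positivity)]
      linarith
    · have hweyl : |μ ⟨ℓ, hℓ⟩| ≤ ε :=
        le_norm_sub_secondMoment_of_card_lt
          (b.orthonormal.comp _ (Fin.castLE_injective (show k + 1 ≤ d by omega))) (fun j => hb _)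
          (fun j => hμ (Fin.le_iff_val_le_val.mpr (by simp only [Fin.val_castLE]; omega)))
          p z (by simp)
      rw [le_div_iff₀ hp0]
      linarith
  · simp only [Fin.castLE_rfl, id, b.sum_repr', sub_self, norm_zero, sq, mul_zero]
    have hS0 : 0 ≤ S := (sq_nonneg _).trans (hzS 0)
    constructor <;> intro <;> positivity
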